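/- Let A be a C*-algebra, I ⊆ A a closed ideal, and H a right Hilbert A-module. For ξ ∈ H, the quotient norm satisfies ‖ξ + HI‖² = ‖⟨ξ,ξ⟩_A + I‖, where HI is the closed submodule H·I. -/

import Mathlib

/-- A (right) Hilbert `A`-module over a C*-algebra `A`: a complete normed
complex vector space with a right `A`-action and an `A`-valued inner product. -/
structure RightHilbertModule (A : Type*) [CStarAlgebra A] [PartialOrder A]
    [StarOrderedRing A] where
  carrier : Type
  [nacg : NormedAddCommGroup carrier]
  [nsp : NormedSpace ℂ carrier]
  [cs : CompleteSpace carrier]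
  rsmul : carrier → A → carrier
  inner : carrier → carrier → A
  inner_add_left : ∀ x y z : carrier, inner (x + y) z = inner x z + inner y z
  inner_smul_left : ∀ (c : ℂ) (x y : carrier), inner (c • x) y = star c • inner x y
  inner_rsmul_right : ∀ (x y : carrier) (a : A), inner x (rsmul y a) = inner x y * a
  star_inner : ∀ x y : carrier, star (inner x y) = inner y x
  inner_self_nonneg : ∀ x : carrier, 0 ≤ inner x x
  inner_self_definite : ∀ x : carrier, inner x x = 0 → x = 0
  norm_sq_eq : ∀ x : carrier, ‖x‖ ^ 2 = ‖inner x x‖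
  rsmul_add_left : ∀ (x y : carrier) (a : A), rsmul (x + y) a = rsmul x a + rsmul y a
  rsmul_add_right : ∀ (x : carrier) (a b : A), rsmul x (a + b) = rsmul x a + rsmul x b
  rsmul_mul : ∀ (x : carrier) (a b : A), rsmul (rsmul x a) b = rsmul x (a * b)
  rsmul_csmul : ∀ (c : ℂ) (x : carrier) (a : A), rsmul (c • x) a = c • rsmul x a

attribute [instance] RightHilbertModule.nacg RightHilbertModule.nsp
  RightHilbertModule.cs

/-- The closed submodule `H·I` of a Hilbert module generated by products with
elements of an ideal `I ⊆ A`. -/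
def RightHilbertModule.idealSubmodule {A : Type*} [CStarAlgebra A] [PartialOrder A]
    [StarOrderedRing A] (M : RightHilbertModule A) (I : Submodule ℂ A) :
    Submodule ℂ M.carrier :=
  (Submodule.span ℂ {z : M.carrier | ∃ x : M.carrier, ∃ a ∈ I, z = M.rsmul x a}).topologicalClosure

section Auxiliary

variable {A : Type*} [CStarAlgebra A] [PartialOrder A] [StarOrderedRing A]

/-- Single-element approximate unit inside a closed ideal. -/
lemma RightHilbertModule.exists_approx_unit (I : Submodule ℂ A)
    (hIleft : ∀ a x : A, x ∈ I → a * x ∈ I)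
    (hIright : ∀ a x : A, x ∈ I → x * a ∈ I)
    {x : A} (hx : x ∈ I) {ε : ℝ} (hε : 0 < ε) :
    ∃ e ∈ I, 0 ≤ e ∧ ‖e‖ ≤ 1 ∧ IsSelfAdjoint e ∧ ‖x - x * e‖ < ε := by
  set a : A := star x * x with ha_def
  have ha : 0 ≤ a := star_mul_self_nonneg x
  have haI : a ∈ I := hIleft (star x) x hx
  have hsa : IsSelfAdjoint a := ha.isSelfAdjoint
  set δ : ℝ := ε ^ 2 / 2 with hδ_def
  have hδ : 0 < δ := by positivity
  set g : ℝ → ℝ := fun t => (max t 0 + δ)⁻¹ with hg_def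
  have hgpos : ∀ t, 0 < max t 0 + δ := fun t =>
    add_pos_of_nonneg_of_pos (le_max_right t 0) hδ
  have hgc : Continuous g := Continuous.inv₀ (by continuity) fun t => (hgpos t).ne'
  set f : ℝ → ℝ := fun t => t * g t with hf_def
  have hfc : Continuous f := continuous_id.mul hgc
  have hspec : ∀ t ∈ spectrum ℝ a, 0 ≤ t := fun t ht => spectrum_nonneg_of_nonneg ha ht
  set e : A := cfc f a with he_def
  have hesa : IsSelfAdjoint e := cfc_predicate f a
  have heI : e ∈ I := by
    have : e = a * cfc g a := by
      rw [he_def, cfc_mul (fun t => t) g a (continuousOn_id) hgc.continuousOn,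
        cfc_id' (R := ℝ) a]
    rw [this]
    exact hIright _ a haI
  have he0 : 0 ≤ e := by
    rw [he_def]
    exact cfc_nonneg fun t ht => by
      have := hspec t ht
      have := (hgpos t).le
      positivity
  have hf_eq : ∀ t, 0 ≤ t → f t = t / (t + δ) := by
    intro t ht0
    simp only [hf_def, hg_def, max_eq_left ht0, div_eq_mul_inv]
  have hf_le_one : ∀ t ∈ spectrum ℝ a, ‖f t‖ ≤ 1 := by
    intro t ht
    have ht0 := hspec t ht
    rw [hf_eq t ht0, Real.norm_of_nonneg (by positivity),
      div_le_one (by positivity)]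
    linarith
  have he1 : ‖e‖ ≤ 1 := norm_cfc_le zero_le_one hf_le_one
  have hkey : ‖x - x * e‖ ^ 2 ≤ δ := by
    have hstar : star (x - x * e) * (x - x * e) = a - a * e - e * a + e * a * e := by
      rw [star_sub, star_mul, hesa.star_eq]
      simp only [ha_def]
      noncomm_ring
    have hfc' : ContinuousOn f (spectrum ℝ a) := hfc.continuousOn
    have h1 : cfc (fun t : ℝ => t * f t) a = a * e := by
      rw [cfc_mul (fun t => t) f a continuousOn_id hfc', cfc_id' (R := ℝ) a]
    have h2 : cfc (fun t : ℝ => f t * t) a = e * a := by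
      rw [cfc_mul f (fun t => t) a hfc' continuousOn_id, cfc_id' (R := ℝ) a]
    have h3 : cfc (fun t : ℝ => f t * t * f t) a = e * a * e := by
      rw [cfc_mul (fun t => f t * t) f a (hfc'.mul continuousOn_id) hfc', h2]
    have hA : cfc (fun t : ℝ => t - t * f t) a = a - a * e := by
      have := cfc_sub (fun t : ℝ => t) (fun t => t * f t) a continuousOn_id
        (continuousOn_id.mul hfc')
      rw [cfc_id' (R := ℝ) a, h1] at this
      exact this
    have hB : cfc (fun t : ℝ => t - t * f t - f t * t) a = a - a * e - e * a := by
      have := cfc_sub (fun t : ℝ => t - t * f t) (fun t => f t * t) a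
        (continuousOn_id.sub (continuousOn_id.mul hfc')) (hfc'.mul continuousOn_id)
      rw [hA, h2] at this
      exact this
    have hcomb : cfc (fun t : ℝ => t - t * f t - f t * t + f t * t * f t) a
        = a - a * e - e * a + e * a * e := by
      have := cfc_add (a := a) (fun t : ℝ => t - t * f t - f t * t)
        (fun t => f t * t * f t)
        ((continuousOn_id.sub (continuousOn_id.mul hfc')).sub (hfc'.mul continuousOn_id))
        ((hfc'.mul continuousOn_id).mul hfc')
      rw [hB, h3] at this
      exact this
    have hnorm : ‖cfc (fun t : ℝ => t - t * f t - f t * t + f t * t * f t) a‖ ≤ δ := by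
      apply norm_cfc_le hδ.le
      intro t ht
      have ht0 := hspec t ht
      have hval : t - t * f t - f t * t + f t * t * f t = t * (δ / (t + δ)) ^ 2 := by
        rw [hf_eq t ht0]
        field_simp
        ring
      rw [hval, Real.norm_of_nonneg (by positivity), div_pow, ← mul_div_assoc,
        div_le_iff₀ (by positivity)]
      nlinarith [sq_nonneg t, sq_nonneg (t - δ), hδ.le, ht0]
    calc ‖x - x * e‖ ^ 2 = ‖star (x - x * e) * (x - x * e)‖ := by
          rw [CStarRing.norm_star_mul_self, sq]
      _ = ‖cfc (fun t : ℝ => t - t * f t - f t * t + f t * t * f t) a‖ := by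
          rw [hstar, hcomb]
      _ ≤ δ := hnorm
  refine ⟨e, heI, he0, he1, hesa, ?_⟩
  nlinarith [norm_nonneg (x - x * e), hε]

/-- A closed two-sided ideal in a C*-algebra is star-closed. -/
lemma RightHilbertModule.star_mem_ideal (I : Submodule ℂ A)
    (hIclosed : IsClosed (I : Set A))
    (hIleft : ∀ a x : A, x ∈ I → a * x ∈ I)
    (hIright : ∀ a x : A, x ∈ I → x * a ∈ I)
    {x : A} (hx : x ∈ I) : star x ∈ I := by
  have hmem : star x ∈ closure (I : Set A) := by
    rw [Metric.mem_closure_iff]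
    intro ε hε
    obtain ⟨e, heI, -, -, hesa, hlt⟩ :=
      RightHilbertModule.exists_approx_unit I hIleft hIright hx hε
    refine ⟨e * star x, hIright (star x) e heI, ?_⟩
    have : star x - e * star x = star (x - x * e) := by
      rw [star_sub, star_mul, hesa.star_eq]
    rw [dist_eq_norm, this, norm_star]
    exact hlt
  rwa [hIclosed.closure_eq] at hmem

/-- Conjugation by `1 - e` is norm-nonincreasing when `0 ≤ e` and `‖e‖ ≤ 1`. -/
lemma RightHilbertModule.norm_conj_le {e : A} (he0 : 0 ≤ e) (he1 : ‖e‖ ≤ 1) (c : A) :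
    ‖c - e * c - c * e + e * c * e‖ ≤ ‖c‖ := by
  have hE0 : (0 : Unitization ℂ A) ≤ e := Unitization.inr_nonneg_iff.mpr he0
  have hE1 : (e : Unitization ℂ A) ≤ 1 := by
    rw [← CStarAlgebra.norm_le_one_iff_of_nonneg _ hE0, Unitization.norm_inr]
    exact he1
  have h1e : ‖(1 : Unitization ℂ A) - e‖ ≤ 1 := by
    rw [CStarAlgebra.norm_le_one_iff_of_nonneg _ (sub_nonneg.mpr hE1)]
    simpa using hE0
  have key : ((c - e * c - c * e + e * c * e : A) : Unitization ℂ A)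
      = (1 - (e : Unitization ℂ A)) * c * (1 - e) := by
    simp only [Unitization.inr_add, Unitization.inr_sub, Unitization.inr_mul]
    noncomm_ring
  rw [← Unitization.norm_inr (𝕜 := ℂ) (c - e * c - c * e + e * c * e), key]
  calc ‖(1 - (e : Unitization ℂ A)) * c * (1 - e)‖
      ≤ ‖(1 - (e : Unitization ℂ A)) * c‖ * ‖(1 : Unitization ℂ A) - e‖ := norm_mul_le _ _
    _ ≤ ‖(1 : Unitization ℂ A) - e‖ * ‖(c : Unitization ℂ A)‖ * ‖(1 : Unitization ℂ A) - e‖ := by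
        gcongr
        exact norm_mul_le _ _
    _ ≤ 1 * ‖(c : Unitization ℂ A)‖ * 1 := by
        gcongr <;> positivity
    _ = ‖c‖ := by rw [Unitization.norm_inr]; ring

end Auxiliary

namespace RightHilbertModule

variable {A : Type*} [CStarAlgebra A] [PartialOrder A] [StarOrderedRing A]
  (M : RightHilbertModule A)

lemma inner_add_right (x y z : M.carrier) :
    M.inner x (y + z) = M.inner x y + M.inner x z := by
  rw [← M.star_inner, M.inner_add_left, star_add, M.star_inner, M.star_inner]

lemma inner_smul_right (c : ℂ) (x y : M.carrier) :
    M.inner x (c • y) = c • M.inner x y := by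
  rw [← M.star_inner, M.inner_smul_left, star_smul, star_star, M.star_inner]

lemma inner_zero_left (z : M.carrier) : M.inner 0 z = 0 := by
  have := M.inner_add_left 0 0 z
  rw [add_zero] at this
  exact (add_eq_left.mp this.symm)

lemma inner_zero_right (z : M.carrier) : M.inner z 0 = 0 := by
  rw [← M.star_inner, M.inner_zero_left, star_zero]

lemma inner_neg_right (z y : M.carrier) : M.inner z (-y) = -M.inner z y := by
  rw [← neg_one_smul ℂ y, M.inner_smul_right, neg_one_smul]

lemma inner_neg_left (z y : M.carrier) : M.inner (-y) z = -M.inner y z := by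
  rw [← M.star_inner, M.inner_neg_right, star_neg, M.star_inner]

lemma inner_sub_right (x y z : M.carrier) :
    M.inner x (y - z) = M.inner x y - M.inner x z := by
  rw [sub_eq_add_neg, M.inner_add_right, M.inner_neg_right, ← sub_eq_add_neg]

noncomputable instance : SMul Aᵐᵒᵖ M.carrier := ⟨fun a x => M.rsmul x a.unop⟩

lemma norm_inner_le' (x y : M.carrier) : ‖M.inner x y‖ ≤ ‖x‖ * ‖y‖ := by
  rcases eq_or_ne x 0 with rfl | hx
  · simp [M.inner_zero_left]
  have hleft : ∀ (u v : M.carrier) (c : A), M.inner (M.rsmul u c) v = star c * M.inner u v := by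
    intro u v c
    rw [← M.star_inner, M.inner_rsmul_right, star_mul, M.star_inner]
  have hreal : ∀ (u v : M.carrier) (r : ℝ), M.inner ((r : ℂ) • u) v = r • M.inner u v := by
    intro u v r
    rw [M.inner_smul_left, Complex.star_def, Complex.conj_ofReal]
    exact (RCLike.real_smul_eq_coe_smul (K := ℂ) r _).symm
  have hrealr : ∀ (u v : M.carrier) (r : ℝ), M.inner u ((r : ℂ) • v) = r • M.inner u v := by
    intro u v r
    rw [M.inner_smul_right]
    exact (RCLike.real_smul_eq_coe_smul (K := ℂ) r _).symm
  have hsubl : ∀ u v w : M.carrier, M.inner (u - v) w = M.inner u w - M.inner v w := by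
    intro u v w
    rw [sub_eq_add_neg, M.inner_add_left, M.inner_neg_left, ← sub_eq_add_neg]
  set a := M.inner x y with ha
  have hyx : M.inner y x = star a := by rw [ha, M.star_inner]
  set t : ℝ := ‖x‖ ^ 2 with ht_def
  have ht : 0 < t := by have := norm_pos_iff.mpr hx; positivity
  have hxx : ‖M.inner x x‖ = t := (M.norm_sq_eq x).symm
  have h0 := M.inner_self_nonneg (M.rsmul x a - (t : ℂ) • y)
  rw [hsubl, M.inner_sub_right, M.inner_sub_right, hleft, hleft, M.inner_rsmul_right, hreal,
    hreal, hrealr, hrealr, M.inner_rsmul_right, hyx, ← ha] at h0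
  have hconj : star a * M.inner x x * a ≤ t • (star a * a) := by
    rw [← hxx]
    exact CStarAlgebra.star_left_conjugate_le_norm_smul (M.inner_self_nonneg x).isSelfAdjoint
  have h1 : t • (star a * a) ≤ t • (t • M.inner y y) := by
    have : 0 ≤ t • (t • M.inner y y) - t • (star a * a) := by
      refine h0.trans ?_
      have := sub_le_sub_right (sub_le_sub_right (sub_le_sub_right hconj (t • (star a * a)))
        (t • (star a * a))) 0
      convert add_le_add_right this (t • t • M.inner y y) using 1
      · simp only [mul_smul_comm, mul_assoc]; abel
      · abel
    exact sub_nonneg.mp this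
  have h2 : star a * a ≤ t • M.inner y y := (smul_le_smul_iff_of_pos_left ht).mp h1
  have h3 := CStarAlgebra.norm_le_norm_of_nonneg_of_le (star_mul_self_nonneg a) h2
  rw [CStarRing.norm_star_mul_self, norm_smul, ← M.norm_sq_eq y, Real.norm_of_nonneg ht.le,
    ht_def] at h3
  have h4 : ‖a‖ ^ 2 ≤ (‖x‖ * ‖y‖) ^ 2 := by nlinarith
  exact (pow_le_pow_iff_left₀ (norm_nonneg _) (by positivity) two_ne_zero).mp h4

lemma continuous_inner_right (z : M.carrier) :
    Continuous fun y => M.inner z y := by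
  refine (LipschitzWith.of_dist_le_mul (K := ‖z‖₊) fun y₁ y₂ => ?_).continuous
  rw [dist_eq_norm, dist_eq_norm, ← M.inner_sub_right]
  exact M.norm_inner_le' z (y₁ - y₂)

variable {I : Submodule ℂ A}

lemma inner_right_mem (hIclosed : IsClosed (I : Set A))
    (hIleft : ∀ a x : A, x ∈ I → a * x ∈ I)
    (z : M.carrier) {y : M.carrier} (hy : y ∈ M.idealSubmodule I) :
    M.inner z y ∈ I := by
  set S := Submodule.span ℂ {w : M.carrier | ∃ x : M.carrier, ∃ a ∈ I, w = M.rsmul x a}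
  have hsub : ∀ w ∈ S, M.inner z w ∈ I := by
    intro w hw
    induction hw using Submodule.span_induction with
    | mem w hw =>
        obtain ⟨x, a, haI, rfl⟩ := hw
        rw [M.inner_rsmul_right]
        exact hIleft _ a haI
    | zero => rw [M.inner_zero_right]; exact zero_mem I
    | add u v _ _ hu hv => rw [M.inner_add_right]; exact add_mem hu hv
    | smul c u _ hu => rw [M.inner_smul_right]; exact Submodule.smul_mem I c hu
  have hmapsto : Set.MapsTo (M.inner z) (S : Set M.carrier) (I : Set A) := hsub
  have hy' : y ∈ closure (S : Set M.carrier) := by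
    have : y ∈ (S.topologicalClosure : Set M.carrier) := hy
    rwa [Submodule.topologicalClosure_coe] at this
  have := hmapsto.closure (M.continuous_inner_right z) hy'
  rwa [hIclosed.closure_eq] at this

lemma inner_left_mem (hIclosed : IsClosed (I : Set A))
    (hIleft : ∀ a x : A, x ∈ I → a * x ∈ I)
    (hIright : ∀ a x : A, x ∈ I → x * a ∈ I)
    (z : M.carrier) {y : M.carrier} (hy : y ∈ M.idealSubmodule I) :
    M.inner y z ∈ I := by
  rw [← M.star_inner]
  exact RightHilbertModule.star_mem_ideal I hIclosed hIleft hIright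
    (M.inner_right_mem hIclosed hIleft z hy)

end RightHilbertModule

/-- The Banach quotient norm on `H/HI` satisfies
`‖ξ + HI‖² = ‖⟨ξ,ξ⟩ + I‖`, both quotient norms written as infima. -/
theorem quotient_norm_sq_eq {A : Type*} [CStarAlgebra A]
    [PartialOrder A] [StarOrderedRing A] (M : RightHilbertModule A)
    (I : Submodule ℂ A) (hIclosed : IsClosed (I : Set A))
    (hIleft : ∀ a x : A, x ∈ I → a * x ∈ I)
    (hIright : ∀ a x : A, x ∈ I → x * a ∈ I)
    (ξ : M.carrier) :
    (sInf {r : ℝ | ∃ y ∈ M.idealSubmodule I, r = ‖ξ + y‖}) ^ 2 =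
      sInf {r : ℝ | ∃ x ∈ I, r = ‖M.inner ξ ξ + x‖} := by
  set b : A := M.inner ξ ξ with hb_def
  have hbsa : IsSelfAdjoint b := by rw [hb_def]; exact (M.star_inner ξ ξ)
  set S1 : Set ℝ := {r : ℝ | ∃ y ∈ M.idealSubmodule I, r = ‖ξ + y‖} with hS1_def
  set S2 : Set ℝ := {r : ℝ | ∃ x ∈ I, r = ‖b + x‖} with hS2_def
  have hS1ne : S1.Nonempty := ⟨‖ξ + 0‖, 0, Submodule.zero_mem _, rfl⟩
  have hS2ne : S2.Nonempty := ⟨‖b + 0‖, 0, Submodule.zero_mem _, rfl⟩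
  have hS1bdd : BddBelow S1 := ⟨0, by rintro s ⟨y, hy, rfl⟩; exact norm_nonneg _⟩
  have hS2bdd : BddBelow S2 := ⟨0, by rintro s ⟨x, hx, rfl⟩; exact norm_nonneg _⟩
  have hd0 : 0 ≤ sInf S1 := Real.sInf_nonneg (by rintro s ⟨y, hy, rfl⟩; exact norm_nonneg _)
  have hr0 : 0 ≤ sInf S2 := Real.sInf_nonneg (by rintro s ⟨x, hx, rfl⟩; exact norm_nonneg _)
  apply le_antisymm
  · -- d² ≤ r
    refine le_csInf hS2ne ?_
    rintro s ⟨x, hxI, rfl⟩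
    refine le_of_forall_pos_le_add fun ε hε => ?_
    obtain ⟨e, heI, he0, he1, hesa, hlt⟩ :=
      RightHilbertModule.exists_approx_unit I hIleft hIright hxI (half_pos hε)
    have hyN : M.rsmul ξ e ∈ M.idealSubmodule I :=
      Submodule.le_topologicalClosure _ (Submodule.subset_span ⟨ξ, e, heI, rfl⟩)
    have hd : sInf S1 ≤ ‖ξ + -(M.rsmul ξ e)‖ :=
      csInf_le hS1bdd ⟨-(M.rsmul ξ e), neg_mem hyN, rfl⟩
    have hd2 : (sInf S1) ^ 2 ≤ ‖ξ + -(M.rsmul ξ e)‖ ^ 2 := by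
      exact pow_le_pow_left₀ hd0 hd 2
    have hinner : M.inner (ξ + -(M.rsmul ξ e)) (ξ + -(M.rsmul ξ e))
        = b - b * e - e * b + e * b * e := by
      have h1 : M.inner ξ (M.rsmul ξ e) = b * e := M.inner_rsmul_right ξ ξ e
      have h2 : M.inner (M.rsmul ξ e) ξ = e * b := by
        rw [← M.star_inner, h1, star_mul, hesa.star_eq, hbsa.star_eq]
      have h3 : M.inner (M.rsmul ξ e) (M.rsmul ξ e) = e * b * e := by
        rw [M.inner_rsmul_right, h2]
      simp only [M.inner_add_left, M.inner_add_right, M.inner_neg_left,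
        M.inner_neg_right, neg_neg, h1, h2, h3]
      noncomm_ring
    have hsplit : b - b * e - e * b + e * b * e
        = ((b + x) - e * (b + x) - (b + x) * e + e * (b + x) * e)
          - (x - e * x - x * e + e * x * e) := by noncomm_ring
    have hTx : ‖x - e * x - x * e + e * x * e‖ ≤ 2 * ‖x - x * e‖ := by
      have hre : x - e * x - x * e + e * x * e = (x - x * e) - e * (x - x * e) := by
        noncomm_ring
      rw [hre]
      calc ‖(x - x * e) - e * (x - x * e)‖
          ≤ ‖x - x * e‖ + ‖e * (x - x * e)‖ := norm_sub_le _ _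
        _ ≤ ‖x - x * e‖ + ‖e‖ * ‖x - x * e‖ := by gcongr; exact norm_mul_le _ _
        _ ≤ ‖x - x * e‖ + 1 * ‖x - x * e‖ := by gcongr
        _ = 2 * ‖x - x * e‖ := by ring
    calc (sInf S1) ^ 2 ≤ ‖ξ + -(M.rsmul ξ e)‖ ^ 2 := hd2
      _ = ‖M.inner (ξ + -(M.rsmul ξ e)) (ξ + -(M.rsmul ξ e))‖ := M.norm_sq_eq _
      _ = ‖((b + x) - e * (b + x) - (b + x) * e + e * (b + x) * e)
            - (x - e * x - x * e + e * x * e)‖ := by rw [hinner, hsplit]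
      _ ≤ ‖(b + x) - e * (b + x) - (b + x) * e + e * (b + x) * e‖
            + ‖x - e * x - x * e + e * x * e‖ := norm_sub_le _ _
      _ ≤ ‖b + x‖ + 2 * ‖x - x * e‖ :=
          add_le_add (RightHilbertModule.norm_conj_le he0 he1 (b + x)) hTx
      _ ≤ ‖b + x‖ + ε := by linarith
  · -- r ≤ d²
    have hsqrt : Real.sqrt (sInf S2) ≤ sInf S1 := by
      refine le_csInf hS1ne ?_
      rintro s ⟨y, hyN, rfl⟩
      have hw : M.inner ξ y + M.inner y ξ + M.inner y y ∈ I := by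
        refine add_mem (add_mem ?_ ?_) ?_
        · exact M.inner_right_mem hIclosed hIleft ξ hyN
        · exact M.inner_left_mem hIclosed hIleft hIright ξ hyN
        · exact M.inner_right_mem hIclosed hIleft y hyN
      have hmem : ‖ξ + y‖ ^ 2 ∈ S2 := by
        refine ⟨M.inner ξ y + M.inner y ξ + M.inner y y, hw, ?_⟩
        rw [M.norm_sq_eq (ξ + y)]
        congr 1
        simp only [M.inner_add_left, M.inner_add_right, hb_def]
        try abel
      have hle : sInf S2 ≤ ‖ξ + y‖ ^ 2 := csInf_le hS2bdd hmem
      calc Real.sqrt (sInf S2) ≤ Real.sqrt (‖ξ + y‖ ^ 2) := Real.sqrt_le_sqrt hle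
        _ = ‖ξ + y‖ := by rw [Real.sqrt_sq (norm_nonneg _)]
    calc sInf S2 = Real.sqrt (sInf S2) ^ 2 := (Real.sq_sqrt hr0).symm
      _ ≤ (sInf S1) ^ 2 := by exact pow_le_pow_left₀ (Real.sqrt_nonneg _) hsqrt 2
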